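/- Let T : X → X be a locally scaling transformation for radius r on a compact-open subset X of a non-archimedean local field K, with associated transition matrix A on H = X/B_r(0), and let (X_A, μ_{A,v}, T_A) be the associated one-sided Markov shift with stationary vector v(i) = μ(B_r(0)) for all i. Then the map Φ : X → X_A defined by π_n(Φ(x)) = (coset in H of T^n(x)) is continuous, measure-preserving, surjective, intertwines T with T_A (Φ∘T = T_A∘Φ), and the preimage under Φ of any cylinder set [d_0 … d_ℓ] is a ball of measure equal to μ_{A,v}([d_0…d_ℓ]) = v(d_0)A(d_0,d_1)⋯A(d_{ℓ-1},d_ℓ). -/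

import Mathlib

/-!
Inductively, the level-`l` cylinder of the coding map is a closed ball `B(c, ‖z‖ r)` on which
`T^l` stretches distances by `‖z‖⁻¹`, so that `T^l` maps it onto `B(d_l, r)`: a similarity between
compact balls of matching radii is onto, because an isometric self-map of a compact metric space
is. The transition set `B(d_l, r) ∩ T⁻¹ B(d_{l+1}, r)` is a ball `B(p, r / C p)` on which `T`
stretches by `C p`, and `C p = ‖w‖` for a unit `w`; pulling it back along `T^l` gives the next
cylinder, a ball of radius `‖z w⁻¹‖ r`. A Haar measure scales balls by the distributive Haar
character, `μ B(c, ‖z‖ s) = Δ(z) μ B(0, s)`, so each transition weight is a value of `Δ` and their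
product is the relative measure of the cylinder. Surjectivity of the coding map follows from the
nested nonempty compact cylinders, and continuity from the local constancy of `rep`.
-/

open Metric MeasureTheory

theorem Isometry.iterate {α : Type*} [PseudoEMetricSpace α] {f : α → α} (hf : Isometry f) :
    ∀ n, Isometry f^[n]
  | 0 => isometry_id
  | n + 1 => (hf.iterate n).comp hf

theorem Isometry.surjective_of_compactSpace {α : Type*} [MetricSpace α] [CompactSpace α]
    {f : α → α} (hf : Isometry f) : Function.Surjective f := by
  intro y
  by_contra! hy
  -- a point `ε`-far from `range f` has an `ε`-separated orbit
  have hclosed : IsClosed (Set.range f) := (isCompact_range hf.continuous).isClosed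
  obtain ⟨ε, hε, hball⟩ := Metric.isOpen_iff.1 hclosed.isOpen_compl y (by simpa using hy)
  obtain ⟨a, -, φ, hφ, hlim⟩ :=
    isCompact_univ.tendsto_subseq (x := fun n => f^[n] y) (fun _ => Set.mem_univ _)
  obtain ⟨N, hN⟩ := Metric.cauchySeq_iff'.1 hlim.cauchySeq ε hε
  obtain ⟨k, hk⟩ := Nat.exists_eq_add_of_lt (hφ (Nat.lt_succ_self N))
  have hdist : dist (f^[k + 1] y) y < ε := by
    have := hN (N + 1) N.le_succ
    rwa [Function.comp_apply, Function.comp_apply, hk, add_assoc,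
      Function.iterate_add_apply, (hf.iterate _).dist_eq] at this
  exact hball (mem_ball.2 hdist) ⟨f^[k] y, (Function.iterate_succ_apply' f k y).symm⟩

section Scaling

variable {K : Type*} [NontriviallyNormedField K]

def ScalesOn (φ : K → K) (s : Set K) (a : K) : Prop :=
  ∀ x ∈ s, ∀ y ∈ s, ‖a‖ * ‖φ x - φ y‖ = ‖x - y‖

theorem ScalesOn.surjOn_closedBall [ProperSpace K] {φ : K → K} {c : K} {z : Kˣ} {R : ℝ}
    (hR : 0 ≤ R) (hφ : ScalesOn φ (closedBall c (‖(z : K)‖ * R)) z) :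
    Set.SurjOn φ (closedBall c (‖(z : K)‖ * R)) (closedBall (φ c) R) := by
  set B := closedBall c (‖(z : K)‖ * R)
  have hc : c ∈ B := mem_closedBall_self (by positivity)
  -- `x ↦ c + z (φ x - φ c)` is an isometric self-map of the compact ball `B`
  have hψ : Set.MapsTo (fun x => c + z * (φ x - φ c)) B B := fun x hx => by
    rw [mem_closedBall, dist_eq_norm, add_sub_cancel_left, norm_mul, hφ x hx c hc, ← dist_eq_norm]
    exact hx
  have : CompactSpace B := isCompact_iff_compactSpace.1 (isCompact_closedBall c _)
  have hiso : Isometry hψ.restrict := Isometry.of_dist_eq fun x y => by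
    simp only [Subtype.dist_eq, Set.MapsTo.val_restrict_apply, dist_eq_norm]
    rw [add_sub_add_left_eq_sub, ← mul_sub, norm_mul, sub_sub_sub_cancel_right, hφ x x.2 y y.2]
  intro w hw
  have hw' : c + z * (w - φ c) ∈ B := by
    rw [mem_closedBall, dist_eq_norm, add_sub_cancel_left, norm_mul, ← dist_eq_norm]
    exact mul_le_mul_of_nonneg_left hw (norm_nonneg _)
  obtain ⟨⟨x, hx⟩, hxw⟩ := hiso.surjective_of_compactSpace ⟨_, hw'⟩
  exact ⟨x, hx, by simpa using congrArg Subtype.val hxw⟩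

variable [IsUltrametricDist K] [ProperSpace K]

theorem ScalesOn.exists_inter_preimage_closedBall_eq {φ : K → K} {c p : K} {z : Kˣ} {R ρ : ℝ}
    (hφ : ScalesOn φ (closedBall c (‖(z : K)‖ * R)) z) (hp : p ∈ closedBall (φ c) R)
    (hρ : ρ ≤ R) :
    ∃ c', closedBall c (‖(z : K)‖ * R) ∩ φ ⁻¹' closedBall p ρ = closedBall c' (‖(z : K)‖ * ρ) := by
  have hz : 0 < ‖(z : K)‖ := norm_pos_iff.2 z.ne_zero
  obtain ⟨c', hc', rfl⟩ := hφ.surjOn_closedBall (dist_nonneg.trans hp) hp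
  refine ⟨c', Set.ext fun x => ⟨fun ⟨hx, hφx⟩ => ?_, fun hx => ?_⟩⟩
  · rw [mem_closedBall, dist_eq_norm, ← hφ x hx c' hc', ← dist_eq_norm]
    exact mul_le_mul_of_nonneg_left hφx hz.le
  · have hxB : x ∈ closedBall c (‖(z : K)‖ * R) := by
      rw [IsUltrametricDist.closedBall_eq_of_mem hc']
      exact closedBall_subset_closedBall (by gcongr) hx
    refine ⟨hxB, ?_⟩
    rw [mem_closedBall, dist_eq_norm, ← hφ x hxB c' hc', ← dist_eq_norm] at hx
    exact le_of_mul_le_mul_left hx hz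

theorem ScalesOn.exists_inter_preimage_closedBall_eq_and_comp {φ ψ : K → K} {c p : K}
    {z v : Kˣ} {R : ℝ} (hφ : ScalesOn φ (closedBall c (‖(z : K)‖ * R)) z)
    (hp : p ∈ closedBall (φ c) R) (hv : ‖(v : K)‖ ≤ 1)
    (hψ : ScalesOn ψ (closedBall p (‖(v : K)‖ * R)) v) :
    ∃ c', closedBall c (‖(z : K)‖ * R) ∩ φ ⁻¹' closedBall p (‖(v : K)‖ * R) =
        closedBall c' (‖((z * v : Kˣ) : K)‖ * R) ∧
      ScalesOn (ψ ∘ φ) (closedBall c' (‖((z * v : Kˣ) : K)‖ * R)) (z * v : Kˣ) := by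
  have hR : 0 ≤ R := dist_nonneg.trans hp
  obtain ⟨c', hc'⟩ := hφ.exists_inter_preimage_closedBall_eq hp
    (mul_le_of_le_one_left hR hv)
  rw [Units.val_mul, norm_mul, mul_assoc]
  refine ⟨c', hc', ?_⟩
  rw [← hc']
  rintro x ⟨hx, hφx⟩ y ⟨hy, hφy⟩
  rw [norm_mul, mul_assoc, Function.comp_apply, Function.comp_apply, hψ _ hφx _ hφy,
    hφ x hx y hy]

end Scaling

theorem closedBall_subset_of_eq_biUnion {α : Type*} [PseudoMetricSpace α] [IsUltrametricDist α]
    {X : Set α} {r : ℝ} {reps : Finset α}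
    (hcover : X = ⋃ b ∈ reps, closedBall b r) {x : α} (hx : x ∈ X) : closedBall x r ⊆ X := by
  rw [hcover] at hx ⊢
  obtain ⟨b, hb, hxb⟩ := Set.mem_iUnion₂.1 hx
  rw [← IsUltrametricDist.closedBall_eq_of_mem hxb]
  exact Set.subset_biUnion_of_mem (u := fun b => closedBall b r) hb

structure IsLocallyScaling {E : Type*} [SeminormedAddCommGroup E] (X : Set E) (r : ℝ)
    (T : E → E) (C : E → ℝ) : Prop where
  closedBall_subset : ∀ x ∈ X, closedBall x r ⊆ X
  mapsTo : Set.MapsTo T X X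
  one_le : ∀ x ∈ X, 1 ≤ C x
  norm_sub_eq : ∀ x ∈ X, ∀ y ∈ X, ‖x - y‖ ≤ r → ‖T x - T y‖ = C x * ‖x - y‖

namespace IsLocallyScaling

variable {K : Type*} [NontriviallyNormedField K] {X : Set K} {r : ℝ} {T : K → K} {C : K → ℝ}

theorem C_eq_of_norm_sub_le (h : IsLocallyScaling X r T C) {x y : K} (hx : x ∈ X) (hy : y ∈ X)
    (hxy : ‖x - y‖ ≤ r) : C x = C y := by
  rcases eq_or_ne x y with rfl | hne
  · rfl
  refine mul_right_cancel₀ (norm_ne_zero_iff.2 (sub_ne_zero.2 hne)) ?_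
  rw [← h.norm_sub_eq x hx y hy hxy, norm_sub_rev, norm_sub_rev x,
    h.norm_sub_eq y hy x hx (by rwa [norm_sub_rev])]

theorem continuousOn (h : IsLocallyScaling X r T C) (hr : 0 < r) : ContinuousOn T X := by
  intro x hx
  rw [Metric.continuousWithinAt_iff]
  intro ε hε
  have hCx : 0 < C x := one_pos.trans_le (h.one_le x hx)
  refine ⟨min r (ε / C x), by positivity, fun y hy hyx => ?_⟩
  rw [dist_eq_norm] at hyx ⊢
  rw [norm_sub_rev, h.norm_sub_eq x hx y hy ((norm_sub_rev x y).trans_le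
    (hyx.le.trans (min_le_left _ _)))]
  calc C x * ‖x - y‖ < C x * (ε / C x) := by
        rw [norm_sub_rev]; exact mul_lt_mul_of_pos_left (hyx.trans_le (min_le_right _ _)) hCx
    _ = ε := mul_div_cancel₀ ε hCx.ne'

variable [IsUltrametricDist K]

theorem norm_sub_eq_of_mem_closedBall (h : IsLocallyScaling X r T C) {p x y : K} (hp : p ∈ X)
    (hx : x ∈ closedBall p r) (hy : y ∈ closedBall p r) :
    ‖T x - T y‖ = C p * ‖x - y‖ := by
  have hxX := h.closedBall_subset p hp hx
  have hxy : ‖x - y‖ ≤ r := by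
    have := IsUltrametricDist.closedBall_eq_of_mem hx ▸ hy
    rwa [mem_closedBall, dist_eq_norm, norm_sub_rev] at this
  rw [h.norm_sub_eq x hxX y (h.closedBall_subset p hp hy) hxy,
    h.C_eq_of_norm_sub_le hxX hp (by rwa [mem_closedBall, dist_eq_norm] at hx)]

theorem exists_unit_norm_eq (h : IsLocallyScaling X r T C) (hr : ∃ z : K, z ≠ 0 ∧ ‖z‖ = r)
    {p : K} (hp : p ∈ X) : ∃ w : Kˣ, ‖(w : K)‖ = C p := by
  obtain ⟨z, hz, rfl⟩ := hr
  have hq : p + z ∈ closedBall p ‖z‖ := by simp [dist_eq_norm]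
  have hTpq := h.norm_sub_eq_of_mem_closedBall hp (mem_closedBall_self (norm_nonneg z)) hq
  rw [sub_add_cancel_left, norm_neg] at hTpq
  have hCp : 0 < C p := one_pos.trans_le (h.one_le p hp)
  have hw : ‖(T p - T (p + z)) / z‖ = C p := by
    rw [norm_div, hTpq, mul_div_cancel_right₀ _ (norm_ne_zero_iff.2 hz)]
  exact ⟨Units.mk0 _ (norm_pos_iff.1 (hw ▸ hCp)), hw⟩

theorem closedBall_inter_preimage_closedBall (h : IsLocallyScaling X r T C) (hr : 0 < r)
    {p : K} (hp : p ∈ X) :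
    closedBall p r ∩ T ⁻¹' closedBall (T p) r = closedBall p (r / C p) := by
  have hCp : 0 < C p := one_pos.trans_le (h.one_le p hp)
  have hpp : p ∈ closedBall p r := mem_closedBall_self hr.le
  ext y
  simp only [Set.mem_inter_iff, Set.mem_preimage]
  constructor
  · rintro ⟨hy, hTy⟩
    rw [mem_closedBall, dist_eq_norm, norm_sub_rev, le_div_iff₀ hCp, mul_comm,
      ← h.norm_sub_eq_of_mem_closedBall hp hpp hy, ← dist_eq_norm, dist_comm]
    exact hTy
  · intro hy
    have hy' : y ∈ closedBall p r :=
      closedBall_subset_closedBall (div_le_self hr.le (h.one_le p hp)) hy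
    refine ⟨hy', ?_⟩
    rw [mem_closedBall, dist_eq_norm, h.norm_sub_eq_of_mem_closedBall hp hy' hpp, ← dist_eq_norm]
    rw [mem_closedBall, le_div_iff₀ hCp] at hy
    linarith

theorem exists_inter_preimage_eq_closedBall (h : IsLocallyScaling X r T C)
    (hr : ∃ z : K, z ≠ 0 ∧ ‖z‖ = r) {i j : K} (hi : i ∈ X)
    (hne : (closedBall i r ∩ T ⁻¹' closedBall j r).Nonempty) :
    ∃ (p : K) (v : Kˣ), ‖(v : K)‖ ≤ 1 ∧
      closedBall i r ∩ T ⁻¹' closedBall j r = closedBall p (‖(v : K)‖ * r) ∧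
      ScalesOn T (closedBall p (‖(v : K)‖ * r)) v := by
  have hr0 : 0 < r := by obtain ⟨z, hz, rfl⟩ := hr; exact norm_pos_iff.2 hz
  obtain ⟨p, hpi, hpj⟩ := hne
  have hp : p ∈ X := h.closedBall_subset i hi hpi
  obtain ⟨w, hw⟩ := h.exists_unit_norm_eq hr hp
  have hv : ‖((w⁻¹ : Kˣ) : K)‖ = (C p)⁻¹ := by rw [Units.val_inv_eq_inv_val, norm_inv, hw]
  have hv1 : ‖((w⁻¹ : Kˣ) : K)‖ ≤ 1 := hv ▸ inv_le_one_of_one_le₀ (h.one_le p hp)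
  have hsub : closedBall p (‖((w⁻¹ : Kˣ) : K)‖ * r) ⊆ closedBall p r :=
    closedBall_subset_closedBall (mul_le_of_le_one_left hr0.le hv1)
  refine ⟨p, w⁻¹, hv1, ?_, fun x hx y hy => ?_⟩
  · rw [IsUltrametricDist.closedBall_eq_of_mem hpi, IsUltrametricDist.closedBall_eq_of_mem hpj,
      h.closedBall_inter_preimage_closedBall hr0 hp, hv, div_eq_inv_mul]
  · rw [h.norm_sub_eq_of_mem_closedBall hp (hsub hx) (hsub hy), ← mul_assoc, hv,
      inv_mul_cancel₀ (one_pos.trans_le (h.one_le p hp)).ne', one_mul]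

end IsLocallyScaling

/-- The pull-back `Φ⁻¹[d₀ … d_l]` of a cylinder under the coding map, the ball `closedBall (d n) r`
standing for the coset of `d n`. -/
def orbitCylinder {α : Type*} [PseudoMetricSpace α] (T : α → α) (r : ℝ) (d : ℕ → α) (l : ℕ) :
    Set α :=
  {x | ∀ n ≤ l, T^[n] x ∈ closedBall (d n) r}

section Cylinder

variable {α : Type*} [PseudoMetricSpace α] {T : α → α} {r : ℝ} {d : ℕ → α}

theorem orbitCylinder_zero : orbitCylinder T r d 0 = closedBall (d 0) r := by
  ext x
  simp [orbitCylinder]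

theorem orbitCylinder_succ (l : ℕ) :
    orbitCylinder T r d (l + 1) =
      orbitCylinder T r d l ∩ T^[l] ⁻¹' (closedBall (d l) r ∩ T ⁻¹' closedBall (d (l + 1)) r) := by
  ext x
  simp only [orbitCylinder, Set.mem_inter_iff, Set.mem_preimage,
    ← Function.iterate_succ_apply' T]
  refine ⟨fun hx => ⟨fun n hn => hx n (hn.trans l.le_succ), hx l l.le_succ, hx (l + 1) le_rfl⟩,
    fun ⟨hx, _, hx'⟩ n hn => ?_⟩
  rcases Nat.le_succ_iff.1 hn with hn | rfl
  exacts [hx n hn, hx']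

end Cylinder

section Measure

open scoped Pointwise

variable {K : Type*} [NontriviallyNormedField K] [MeasurableSpace K]

noncomputable def transitionWeight (μ : Measure K) (r : ℝ) (T : K → K) (i j : K) : ℝ :=
  (μ (closedBall i r ∩ T ⁻¹' (closedBall j r))).toReal / (μ (closedBall (0 : K) r)).toReal

theorem nonempty_of_transitionWeight_ne_zero {μ : Measure K} {r : ℝ} {T : K → K} {i j : K}
    (h : transitionWeight μ r T i j ≠ 0) : (closedBall i r ∩ T ⁻¹' closedBall j r).Nonempty := by
  contrapose! h
  simp [transitionWeight, h]

variable [ProperSpace K] [BorelSpace K] (μ : Measure K) [μ.IsAddHaarMeasure]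

theorem measure_closedBall_norm_mul (c : K) (z : Kˣ) (s : ℝ) :
    μ (closedBall c (‖(z : K)‖ * s)) = distribHaarChar K z * μ (closedBall 0 s) := by
  have hz : z • closedBall (0 : K) s = closedBall 0 (‖(z : K)‖ * s) := by
    conv_rhs => rw [← smul_zero (z : K), ← smul_closedBall' z.ne_zero]
    rfl
  rw [distribHaarChar_mul, Measure.addHaar_closedBall_center, hz]

theorem transitionWeight_eq_distribHaarChar {r : ℝ} (hr : 0 < r) {T : K → K} {i j p : K}
    {v : Kˣ} (h : closedBall i r ∩ T ⁻¹' closedBall j r = closedBall p (‖(v : K)‖ * r)) :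
    transitionWeight μ r T i j = distribHaarChar K v := by
  have hpos : (μ (closedBall (0 : K) r)).toReal ≠ 0 :=
    (ENNReal.toReal_pos (measure_closedBall_pos μ 0 hr).ne' measure_closedBall_lt_top.ne).ne'
  rw [transitionWeight, h, measure_closedBall_norm_mul, ENNReal.toReal_mul,
    ENNReal.coe_toReal, mul_div_cancel_right₀ _ hpos]

end Measure

namespace IsLocallyScaling

variable {K : Type*} [NontriviallyNormedField K] [IsUltrametricDist K] [ProperSpace K]
  [MeasurableSpace K] [BorelSpace K] (μ : Measure K) [μ.IsAddHaarMeasure]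
  {X : Set K} {r : ℝ} {T : K → K} {C : K → ℝ}

theorem exists_orbitCylinder_eq_closedBall (h : IsLocallyScaling X r T C)
    (hr : ∃ z : K, z ≠ 0 ∧ ‖z‖ = r) {d : ℕ → K} :
    ∀ {l : ℕ}, (∀ n ≤ l, d n ∈ X) →
      (∀ n < l, (closedBall (d n) r ∩ T ⁻¹' closedBall (d (n + 1)) r).Nonempty) →
      ∃ (c : K) (z : Kˣ), orbitCylinder T r d l = closedBall c (‖(z : K)‖ * r) ∧
        ScalesOn T^[l] (closedBall c (‖(z : K)‖ * r)) z ∧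
        (distribHaarChar K z : ℝ) = ∏ n ∈ Finset.range l, transitionWeight μ r T (d n) (d (n + 1))
  | 0, _, _ => ⟨d 0, 1, by simp [orbitCylinder_zero], fun x _ y _ => by simp, by simp⟩
  | l + 1, hd, htrans => by
    have hr0 : 0 < r := by obtain ⟨z, hz, rfl⟩ := hr; exact norm_pos_iff.2 hz
    obtain ⟨c, z, hcyl, hz, hprod⟩ := exists_orbitCylinder_eq_closedBall h hr
      (fun n hn => hd n (hn.trans l.le_succ)) (fun n hn => htrans n (hn.trans l.lt_succ_self))
    obtain ⟨p, v, hv, hQ, hTv⟩ :=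
      h.exists_inter_preimage_eq_closedBall hr (hd l l.le_succ) (htrans l l.lt_succ_self)
    have hc : T^[l] c ∈ closedBall (d l) r :=
      (hcyl ▸ mem_closedBall_self (by positivity) : c ∈ orbitCylinder T r d l) l le_rfl
    have hp : p ∈ closedBall (T^[l] c) r := by
      rw [← IsUltrametricDist.closedBall_eq_of_mem hc]
      exact (hQ ▸ mem_closedBall_self (by positivity) :
        p ∈ closedBall (d l) r ∩ T ⁻¹' closedBall (d (l + 1)) r).1
    obtain ⟨c', hc', hzv⟩ := hz.exists_inter_preimage_closedBall_eq_and_comp hp hv hTv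
    refine ⟨c', z * v, ?_, ?_, ?_⟩
    · rw [orbitCylinder_succ, hcyl, hQ, hc']
    · rwa [Function.iterate_succ']
    · rw [Finset.prod_range_succ, ← hprod, transitionWeight_eq_distribHaarChar μ hr0 hQ,
        map_mul, NNReal.coe_mul]

end IsLocallyScaling

theorem IsLocallyScaling.nonempty_iInter_orbitCylinder {K : Type*} [NontriviallyNormedField K]
    [IsUltrametricDist K] [ProperSpace K] {X : Set K} {r : ℝ} {T : K → K} {C : K → ℝ}
    (h : IsLocallyScaling X r T C) (hr : ∃ z : K, z ≠ 0 ∧ ‖z‖ = r) {d : ℕ → K}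
    (hd : ∀ n, d n ∈ X)
    (htrans : ∀ n, (closedBall (d n) r ∩ T ⁻¹' closedBall (d (n + 1)) r).Nonempty) :
    (⋂ l, orbitCylinder T r d l).Nonempty := by
  have hr0 : 0 < r := by obtain ⟨z, hz, rfl⟩ := hr; exact norm_pos_iff.2 hz
  borelize K
  have hball : ∀ l, ∃ c s, 0 ≤ s ∧ orbitCylinder T r d l = closedBall c s := fun l => by
    obtain ⟨c, z, hc, -⟩ := h.exists_orbitCylinder_eq_closedBall Measure.addHaar hr
      (fun n _ => hd n) (fun n _ => htrans n)
    exact ⟨c, _, by positivity, hc⟩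
  refine IsCompact.nonempty_iInter_of_sequence_nonempty_isCompact_isClosed _
    (fun l => by rw [orbitCylinder_succ]; exact Set.inter_subset_left) (fun l => ?_)
    (by rw [orbitCylinder_zero]; exact isCompact_closedBall _ _) (fun l => ?_)
  · obtain ⟨c, s, hs, hc⟩ := hball l
    exact hc ▸ ⟨c, mem_closedBall_self hs⟩
  · obtain ⟨c, s, -, hc⟩ := hball l
    exact hc ▸ isClosed_closedBall

section Coding

variable {K : Type*} [NontriviallyNormedField K] [IsUltrametricDist K] {X : Set K} {r : ℝ}
  {reps : Finset K} {rep : K → K}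

theorem rep_eq_iff (hdisj : ∀ b ∈ reps, ∀ b' ∈ reps, b ≠ b' → r < ‖b - b'‖)
    (hrep : ∀ x ∈ X, rep x ∈ reps ∧ ‖x - rep x‖ ≤ r) {x b : K} (hx : x ∈ X) (hb : b ∈ reps) :
    rep x = b ↔ x ∈ closedBall b r := by
  refine ⟨fun hxb => ?_, fun hxb => ?_⟩
  · rw [← hxb, mem_closedBall, dist_eq_norm]
    exact (hrep x hx).2
  · by_contra hne
    have hlt := hdisj _ (hrep x hx).1 b hb hne
    have hle : dist (rep x) b ≤ r := (dist_triangle_max (rep x) x b).trans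
      (max_le (by rw [dist_comm, dist_eq_norm]; exact (hrep x hx).2) hxb)
    rw [dist_eq_norm] at hle
    linarith

theorem continuousOn_rep (hdisj : ∀ b ∈ reps, ∀ b' ∈ reps, b ≠ b' → r < ‖b - b'‖)
    (hrep : ∀ x ∈ X, rep x ∈ reps ∧ ‖x - rep x‖ ≤ r) (hr : 0 < r) : ContinuousOn rep X := by
  intro x hx
  have hxrep : x ∈ closedBall (rep x) r := (rep_eq_iff hdisj hrep hx (hrep x hx).1).1 rfl
  refine (continuousWithinAt_const (b := rep x)).congr_of_eventuallyEq ?_ rfl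
  filter_upwards [self_mem_nhdsWithin, mem_nhdsWithin_of_mem_nhds (closedBall_mem_nhds x hr)]
    with y hy hyx
  rw [rep_eq_iff hdisj hrep hy (hrep x hx).1, IsUltrametricDist.closedBall_eq_of_mem hxrep]
  exact hyx

theorem setOf_rep_iterate_eq_orbitCylinder {T : K → K} {C : K → ℝ}
    (h : IsLocallyScaling X r T C) (hdisj : ∀ b ∈ reps, ∀ b' ∈ reps, b ≠ b' → r < ‖b - b'‖)
    (hrep : ∀ x ∈ X, rep x ∈ reps ∧ ‖x - rep x‖ ≤ r) {d : ℕ → K} {l : ℕ}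
    (hd : ∀ n ≤ l, d n ∈ reps) (hd0 : d 0 ∈ X) :
    {x ∈ X | ∀ n ≤ l, rep (T^[n] x) = d n} = orbitCylinder T r d l := by
  ext x
  refine ⟨fun ⟨hx, hxd⟩ n hn => ?_, fun hx => ?_⟩
  · exact (rep_eq_iff hdisj hrep (h.mapsTo.iterate n hx) (hd n hn)).1 (hxd n hn)
  · have hxX : x ∈ X := h.closedBall_subset _ hd0 (hx 0 (Nat.zero_le l))
    exact ⟨hxX, fun n hn => (rep_eq_iff hdisj hrep (h.mapsTo.iterate n hxX) (hd n hn)).2 (hx n hn)⟩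

end Coding

theorem stmt8_general {K : Type*} [NontriviallyNormedField K] [IsUltrametricDist K]
    [ProperSpace K]
    [MeasurableSpace K] [BorelSpace K] (μ : Measure K) [μ.IsAddHaarMeasure]
    (X : Set K)
    (r : ℝ) (hr : ∃ z : K, z ≠ 0 ∧ ‖z‖ = r)
    (reps : Finset K) (hcover : X = ⋃ b ∈ reps, closedBall b r)
    (hdisj : ∀ b ∈ reps, ∀ b' ∈ reps, b ≠ b' → r < ‖b - b'‖)
    (T : K → K) (hT : Set.MapsTo T X X)
    (C : K → ℝ) (hC1 : ∀ x ∈ X, 1 ≤ C x)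
    (hscal : ∀ x ∈ X, ∀ y ∈ X, ‖x - y‖ ≤ r → ‖T x - T y‖ = C x * ‖x - y‖)
    (A : K → K → ℝ)
    (hA : ∀ i j : K, A i j =
      (μ (closedBall i r ∩ T ⁻¹' (closedBall j r))).toReal
        / (μ (closedBall (0 : K) r)).toReal)
    (rep : K → K) (hrep : ∀ x ∈ X, rep x ∈ reps ∧ ‖x - rep x‖ ≤ r) :
    ContinuousOn (fun x => fun n : ℕ => rep (T^[n] x)) X ∧
    (∀ x ∈ X, ∀ n : ℕ, rep (T^[n] (T x)) = rep (T^[n + 1] x)) ∧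
    (∀ ω : ℕ → K, (∀ n, ω n ∈ reps) → (∀ n, A (ω n) (ω (n + 1)) ≠ 0) →
      ∃ x ∈ X, ∀ n, rep (T^[n] x) = ω n) ∧
    (∀ (l : ℕ) (d : ℕ → K), (∀ n ≤ l, d n ∈ reps) → (∀ n < l, A (d n) (d (n + 1)) ≠ 0) →
      ∃ (c : K) (s : ℝ),
        {x ∈ X | ∀ n ≤ l, rep (T^[n] x) = d n} = closedBall c s ∧
        (μ (closedBall c s)).toReal =
          (μ (closedBall (0 : K) r)).toReal * ∏ n ∈ Finset.range l, A (d n) (d (n + 1))) := by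
  have hr0 : 0 < r := by obtain ⟨z, hz, rfl⟩ := hr; exact norm_pos_iff.2 hz
  have h : IsLocallyScaling X r T C :=
    ⟨fun _ hx => closedBall_subset_of_eq_biUnion hcover hx, hT, hC1, hscal⟩
  have hreps : ∀ b ∈ reps, b ∈ X := fun b hb =>
    hcover ▸ Set.mem_biUnion (x := b) hb (mem_closedBall_self hr0.le)
  obtain rfl : A = transitionWeight μ r T := funext₂ hA
  have hcyl : ∀ l d, (∀ n ≤ l, d n ∈ reps) →
      {x ∈ X | ∀ n ≤ l, rep (T^[n] x) = d n} = orbitCylinder T r d l := fun l d hd =>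
    setOf_rep_iterate_eq_orbitCylinder h hdisj hrep hd (hreps _ (hd 0 (Nat.zero_le l)))
  refine ⟨?_, fun x _ n => by rw [Function.iterate_succ_apply], fun ω hω hωA => ?_,
    fun l d hd hdA => ?_⟩
  · exact continuousOn_pi.2 fun n => (continuousOn_rep hdisj hrep hr0).comp
      ((h.continuousOn hr0).iterate h.mapsTo n) (h.mapsTo.iterate n)
  · obtain ⟨x, hx⟩ := h.nonempty_iInter_orbitCylinder hr (fun n => hreps _ (hω n))
      (fun n => nonempty_of_transitionWeight_ne_zero (hωA n))
    have hxω : ∀ n, x ∈ {x ∈ X | ∀ k ≤ n, rep (T^[k] x) = ω k} := fun n =>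
      hcyl n ω (fun k _ => hω k) ▸ Set.mem_iInter.1 hx n
    exact ⟨x, (hxω 0).1, fun n => (hxω n).2 n le_rfl⟩
  · obtain ⟨c, z, hc, -, hprod⟩ := h.exists_orbitCylinder_eq_closedBall μ hr
      (fun n hn => hreps _ (hd n hn)) (fun n hn => nonempty_of_transitionWeight_ne_zero (hdA n hn))
    refine ⟨c, _, (hcyl l d hd).trans hc, ?_⟩
    rw [measure_closedBall_norm_mul, ENNReal.toReal_mul, ENNReal.coe_toReal, hprod, mul_comm]

/-- For a locally scaling transformation `T` on compact-open `X` with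
transition matrix `A` and coset-representative map `rep`, the coding map
`Φ(x) = (rep(Tⁿx))ₙ` into the Markov shift is continuous on `X`, intertwines `T` with
the left shift, is surjective onto the shift space, and the preimage of each cylinder
`[d₀…d_ℓ]` is a ball of measure `v(d₀)·A(d₀,d₁)⋯A(d_{ℓ-1},d_ℓ)` with
`v ≡ μ(B_r(0))`. -/
theorem stmt8 {K : Type*} [NontriviallyNormedField K] [IsUltrametricDist K]
    [CompleteSpace K] [ProperSpace K]
    [MeasurableSpace K] [BorelSpace K] (μ : Measure K) [μ.IsAddHaarMeasure]
    (hμ1 : μ (closedBall (0 : K) 1) = 1)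
    (X : Set K) (hXc : IsCompact X)
    (r : ℝ) (hr : ∃ z : K, z ≠ 0 ∧ ‖z‖ = r)
    (reps : Finset K) (hcover : X = ⋃ b ∈ reps, closedBall b r)
    (hdisj : ∀ b ∈ reps, ∀ b' ∈ reps, b ≠ b' → r < ‖b - b'‖)
    (T : K → K) (hT : Set.MapsTo T X X)
    (C : K → ℝ) (hC1 : ∀ x ∈ X, 1 ≤ C x)
    (hscal : ∀ x ∈ X, ∀ y ∈ X, ‖x - y‖ ≤ r → ‖T x - T y‖ = C x * ‖x - y‖)
    (A : K → K → ℝ)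
    (hA : ∀ i j : K, A i j =
      (μ (closedBall i r ∩ T ⁻¹' (closedBall j r))).toReal
        / (μ (closedBall (0 : K) r)).toReal)
    (rep : K → K) (hrep : ∀ x ∈ X, rep x ∈ reps ∧ ‖x - rep x‖ ≤ r) :
    ContinuousOn (fun x => fun n : ℕ => rep (T^[n] x)) X ∧
    (∀ x ∈ X, ∀ n : ℕ, rep (T^[n] (T x)) = rep (T^[n + 1] x)) ∧
    (∀ ω : ℕ → K, (∀ n, ω n ∈ reps) → (∀ n, A (ω n) (ω (n + 1)) ≠ 0) →
      ∃ x ∈ X, ∀ n, rep (T^[n] x) = ω n) ∧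
    (∀ (l : ℕ) (d : ℕ → K), (∀ n ≤ l, d n ∈ reps) → (∀ n < l, A (d n) (d (n + 1)) ≠ 0) →
      ∃ (c : K) (s : ℝ),
        {x ∈ X | ∀ n ≤ l, rep (T^[n] x) = d n} = closedBall c s ∧
        (μ (closedBall c s)).toReal =
          (μ (closedBall (0 : K) r)).toReal * ∏ n ∈ Finset.range l, A (d n) (d (n + 1))) :=
  stmt8_general μ X r hr reps hcover hdisj T hT C hC1 hscal A hA rep hrep
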